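/- arXiv:2107.10362 — 2 statements merged into one kernel-verified Lean document; each statement's English description precedes it below -/
import Mathlib

section
/- Let n ≥ 3 and d ≥ 2, and let (x^1, …, x^n; C) be a hard ball evolution with n balls in ℝ^d satisfying the normalizations (A3) and (A4). Then there exists a unique t₀ ∈ ℝ such that ⟨x(t), v(t+)⟩ < 0 for all t < t₀ and ⟨x(t), v(t+)⟩ > 0 for all t > t₀; moreover ⟨x(t₀), v(t₀+)⟩ ≥ 0 and |x(t)| ≥ |x(t₀)| for all t ∈ ℝ. -/
/-- A hard ball evolution of `n` balls of radius 1 and equal mass in `ℝ^d`.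
`x j` is the center of the `j`-th ball as a function of time, `C` is the set
of collision times, and `vL j t`, `vR j t` are the left and right velocities
`v^j(t−)`, `v^j(t+)`. -/
structure HardBallEvolution (n d : ℕ) where
  /-- centers of the balls -/
  x : Fin n → ℝ → EuclideanSpace ℝ (Fin d)
  /-- left velocities `v^j(t−)` -/
  vL : Fin n → ℝ → EuclideanSpace ℝ (Fin d)
  /-- right velocities `v^j(t+)` -/
  vR : Fin n → ℝ → EuclideanSpace ℝ (Fin d)
  /-- the set of collision times -/
  C : Set ℝ
  closed_C : IsClosed C
  discrete_C : ∀ t ∈ C, ∃ ε > 0, ∀ s ∈ C, |s - t| < ε → s = t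
  cont : ∀ j, Continuous (x j)
  /-- the balls never overlap -/
  noOverlap : ∀ j k, j ≠ k → ∀ t, 2 ≤ ‖x j t - x k t‖
  /-- `x j` is affine to the right of each time `t`, with slope `vR j t` -/
  affineR : ∀ j t, ∃ ε > 0, ∀ s, t ≤ s → s < t + ε → x j s = x j t + (s - t) • vR j t
  /-- `x j` is affine to the left of each time `t`, with slope `vL j t` -/
  affineL : ∀ j t, ∃ ε > 0, ∀ s, t - ε < s → s ≤ t → x j s = x j t + (s - t) • vL j t
  /-- velocities change only at collision times -/
  noKink : ∀ j, ∀ t, t ∉ C → vR j t = vL j t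
  /-- at each collision time there is exactly one touching pair `j ≠ k` with
  `‖x j t - x k t‖ = 2`; the velocities of this pair are transformed by the
  elastic collision law with `u = (x j t - x k t)/‖x j t - x k t‖`, while all
  other velocities are unchanged -/
  collision : ∀ t ∈ C, ∃ j k : Fin n, j ≠ k ∧ ‖x j t - x k t‖ = 2 ∧
    (∀ j' k' : Fin n, j' ≠ k' → ‖x j' t - x k' t‖ = 2 →
      (j' = j ∧ k' = k) ∨ (j' = k ∧ k' = j)) ∧
    (inner ℝ (vL j t - vL k t) (‖x j t - x k t‖⁻¹ • (x j t - x k t)) : ℝ) < 0 ∧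
    vR j t = vL j t +
      (inner ℝ (vL k t - vL j t) (‖x j t - x k t‖⁻¹ • (x j t - x k t)) : ℝ) •
        (‖x j t - x k t‖⁻¹ • (x j t - x k t)) ∧
    vR k t = vL k t +
      (inner ℝ (vL j t - vL k t) (‖x j t - x k t‖⁻¹ • (x j t - x k t)) : ℝ) •
        (‖x j t - x k t‖⁻¹ • (x j t - x k t)) ∧
    ∀ i, i ≠ j → i ≠ k → vR i t = vL i t

namespace HardBallEvolution

variable {n d : ℕ}

/-- The collision at time `t ∈ C` involves balls `j` and `k`. -/
def involves (E : HardBallEvolution n d) (t : ℝ) (j k : Fin n) : Prop :=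
  t ∈ E.C ∧ j ≠ k ∧ ‖E.x j t - E.x k t‖ = 2

/-- `|x(t)|`, the Euclidean norm of the configuration vector in `ℝ^{dn}`. -/
noncomputable def xnorm (E : HardBallEvolution n d) (t : ℝ) : ℝ :=
  Real.sqrt (∑ j, ‖E.x j t‖ ^ 2)

/-- `⟨x(t), v(t+)⟩`, the Euclidean inner product in `ℝ^{dn}`. -/
noncomputable def xvInner (E : HardBallEvolution n d) (t : ℝ) : ℝ :=
  ∑ j, (inner ℝ (E.x j t) (E.vR j t) : ℝ)

/-- Normalization (A3): total momentum zero and center of mass at the origin. -/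
def A3 (E : HardBallEvolution n d) : Prop :=
  (∀ t : ℝ, ∑ j, E.x j t = 0) ∧ (∀ t : ℝ, ∑ j, E.vR j t = 0)

/-- Normalization (A4): total kinetic energy equal to 1. -/
def A4 (E : HardBallEvolution n d) : Prop :=
  ∀ t : ℝ, ∑ j, ‖E.vR j t‖ ^ 2 = 1

end HardBallEvolution

/-!
Between collisions `⟨x, v⟩` grows with derivative `|v|² = 1`, and at a collision of the balls
`j, k` it jumps by `c |x^j - x^k| ≥ 0`, where `c > 0` is the momentum exchanged along the line of
centres. So `t ↦ ⟨x(t), v(t+)⟩ - t` is nondecreasing and `⟨x, v(·+)⟩` changes sign exactly once,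
at `t₀`. Since `|x|²` has right derivative `2 ⟨x, v(t+)⟩`, it decreases before `t₀` and increases
after it.
-/

open Filter Topology Set
open scoped InnerProductSpace

theorem le_of_forall_eventually_nhdsLT_nhdsGT {g : ℝ → ℝ} {a b : ℝ} (hab : a ≤ b)
    (hl : ∀ t ∈ Ioc a b, ∀ᶠ s in 𝓝[<] t, g s ≤ g t)
    (hr : ∀ t ∈ Ico a b, ∀ᶠ s in 𝓝[>] t, g t ≤ g s) : g a ≤ g b := by
  set A := {r ∈ Icc a b | g a ≤ g r}
  have haA : a ∈ A := ⟨left_mem_Icc.2 hab, le_rfl⟩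
  have hA : BddAbove A := ⟨b, fun r hr => hr.1.2⟩
  have hT : sSup A ∈ Icc a b := ⟨le_csSup hA haA, csSup_le ⟨a, haA⟩ fun r hr => hr.1.2⟩
  have hTA : g a ≤ g (sSup A) := by
    rcases hT.1.eq_or_lt with hTa | haT
    · rw [hTa]
    obtain ⟨l, hlT, hl⟩ := (mem_nhdsLT_iff_exists_Ioo_subset.1 (hl (sSup A) ⟨haT, hT.2⟩))
    obtain ⟨r, hrA, hlr⟩ := exists_lt_of_lt_csSup ⟨a, haA⟩ hlT
    rcases (le_csSup hA hrA).eq_or_lt with hrT | hrT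
    · rw [← hrT]; exact hrA.2
    · exact hrA.2.trans (hl ⟨hlr, hrT⟩)
  rcases hT.2.eq_or_lt with hTb | hTb
  · rwa [← hTb]
  obtain ⟨r, hTr, hrb⟩ := ((hr (sSup A) ⟨hT.1, hTb⟩).and (Ioo_mem_nhdsGT hTb)).exists
  exact absurd (le_csSup hA ⟨⟨hT.1.trans hrb.1.le, hrb.2.le⟩, hTA.trans hTr⟩) (not_le.2 hrb.1)

theorem le_of_continuousOn_of_forall_eventually_nhdsGT {f : ℝ → ℝ} {a b : ℝ} (hab : a ≤ b)
    (hf : ContinuousOn f (Icc a b)) (hr : ∀ t ∈ Ico a b, ∀ᶠ s in 𝓝[>] t, f t ≤ f s) :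
    f a ≤ f b := by
  have hclosed : IsClosed ({r | f a ≤ f r} ∩ Icc a b) := by
    rw [inter_comm]; exact hf.preimage_isClosed_of_isClosed isClosed_Icc isClosed_Ici
  exact hclosed.Icc_subset_of_forall_mem_nhdsWithin (le_refl (f a))
    (fun t ht => (hr t ht.2).mono fun _ hs => ht.1.trans hs) (right_mem_Icc.2 hab)

theorem exists_sign_change_of_add_sub_le {φ : ℝ → ℝ}
    (hφ : ∀ s t, s ≤ t → φ s + (t - s) ≤ φ t) (hc : ∀ t, ContinuousWithinAt φ (Ioi t) t) :
    ∃ t₀, ((∀ t < t₀, φ t < 0) ∧ ∀ t > t₀, 0 < φ t) ∧ 0 ≤ φ t₀ := by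
  set N := {t | φ t < 0}
  have hN : N.Nonempty := ⟨-|φ 0| - 1, show φ _ < 0 by
    have := hφ (-|φ 0| - 1) 0 (by linarith [abs_nonneg (φ 0)])
    linarith [le_abs_self (φ 0)]⟩
  have hNbdd : BddAbove N := ⟨|φ 0|, fun t (ht : φ t < 0) => by
    rcases le_total t 0 with h | h
    · linarith [abs_nonneg (φ 0)]
    · linarith [hφ 0 t h, neg_abs_le (φ 0)]⟩
  have hnonneg : ∀ t > sSup N, 0 ≤ φ t := fun t ht => not_lt.1 fun h => (le_csSup hNbdd h).not_gt ht
  refine ⟨sSup N, ⟨fun t ht => ?_, fun t ht => ?_⟩, ?_⟩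
  · obtain ⟨u, hu, htu⟩ := exists_lt_of_lt_csSup hN ht
    linarith [hφ t u htu.le, show φ u < 0 from hu]
  · obtain ⟨m, hm, hmt⟩ := exists_between ht
    linarith [hnonneg m hm, hφ m t hmt.le]
  · by_contra! h
    obtain ⟨t, ht, hlt⟩ := (((hc _).eventually (gt_mem_nhds h)).and self_mem_nhdsWithin).exists
    exact (hnonneg t hlt).not_gt ht

theorem eq_of_sign_change {φ : ℝ → ℝ} {a b : ℝ} (ha : (∀ t < a, φ t < 0) ∧ ∀ t > a, 0 < φ t)
    (hb : (∀ t < b, φ t < 0) ∧ ∀ t > b, 0 < φ t) : a = b := by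
  refine le_antisymm (not_lt.1 fun h => ?_) (not_lt.1 fun h => ?_)
  · obtain ⟨m, hbm, hma⟩ := exists_between h
    exact (ha.1 m hma).not_gt (hb.2 m hbm)
  · obtain ⟨m, ham, hmb⟩ := exists_between h
    exact (hb.1 m hmb).not_gt (ha.2 m ham)

section InnerProductSpace

variable {V : Type*} [NormedAddCommGroup V] [InnerProductSpace ℝ V]

theorem inner_elastic_collision_sub (p q v w u : V) :
    (⟪p, v + ⟪w - v, u⟫_ℝ • u⟫_ℝ - ⟪p, v⟫_ℝ) + (⟪q, w + ⟪v - w, u⟫_ℝ • u⟫_ℝ - ⟪q, w⟫_ℝ) =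
      ⟪w - v, u⟫_ℝ * ⟪p - q, u⟫_ℝ := by
  simp only [inner_add_right, real_inner_smul_right, inner_sub_left]
  ring

theorem sum_inner_add_smul {ι : Type*} [Fintype ι] (p w : ι → V) (c : ℝ) :
    ∑ i, ⟪p i + c • w i, w i⟫_ℝ = ∑ i, ⟪p i, w i⟫_ℝ + c * ∑ i, ‖w i‖ ^ 2 := by
  simp only [inner_add_left, real_inner_smul_left, real_inner_self_eq_norm_sq,
    Finset.sum_add_distrib, Finset.mul_sum]

theorem sum_norm_add_smul_sq {ι : Type*} [Fintype ι] (p w : ι → V) (c : ℝ) :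
    ∑ i, ‖p i + c • w i‖ ^ 2 =
      ∑ i, ‖p i‖ ^ 2 + 2 * c * ∑ i, ⟪p i, w i⟫_ℝ + c ^ 2 * ∑ i, ‖w i‖ ^ 2 := by
  simp only [norm_add_sq_real, real_inner_smul_right, norm_smul, mul_pow, Real.norm_eq_abs,
    sq_abs, Finset.sum_add_distrib, Finset.mul_sum]
  ring_nf

end InnerProductSpace

namespace HardBallEvolution

variable {n d : ℕ} (E : HardBallEvolution n d)

noncomputable def xvInnerLeft (t : ℝ) : ℝ :=
  ∑ j, ⟪E.x j t, E.vL j t⟫_ℝ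

theorem eventually_x_eq_right (j : Fin n) (t : ℝ) :
    ∀ᶠ s in 𝓝[>] t, E.x j s = E.x j t + (s - t) • E.vR j t := by
  obtain ⟨ε, hε, hx⟩ := E.affineR j t
  filter_upwards [Ioo_mem_nhdsGT (lt_add_of_pos_right t hε)] with s hs using hx s hs.1.le hs.2

theorem eventually_x_eq_left (j : Fin n) (t : ℝ) :
    ∀ᶠ s in 𝓝[<] t, E.x j s = E.x j t + (s - t) • E.vL j t := by
  obtain ⟨ε, hε, hx⟩ := E.affineL j t
  filter_upwards [Ioo_mem_nhdsLT (sub_lt_self t hε)] with s hs using hx s hs.1 hs.2.le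

theorem vR_eq_of_forall_mem_Ioo {j : Fin n} {a b : ℝ} {p v : EuclideanSpace ℝ (Fin d)}
    (hx : ∀ r ∈ Ioo a b, E.x j r = p + r • v) {s : ℝ} (hs : s ∈ Ioo a b) : E.vR j s = v := by
  obtain ⟨r, hxr, hr⟩ := ((E.eventually_x_eq_right j s).and (Ioo_mem_nhdsGT hs.2)).exists
  rw [hx r ⟨hs.1.trans hr.1, hr.2⟩, hx s hs] at hxr
  refine smul_right_injective _ (sub_ne_zero.2 hr.1.ne') ?_
  linear_combination (norm := module) -hxr

theorem eventually_vR_eq_right (j : Fin n) (t : ℝ) : ∀ᶠ s in 𝓝[>] t, E.vR j s = E.vR j t := by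
  obtain ⟨ε, hε, hx⟩ := E.affineR j t
  filter_upwards [Ioo_mem_nhdsGT (lt_add_of_pos_right t hε)] with s hs
  refine E.vR_eq_of_forall_mem_Ioo (p := E.x j t - t • E.vR j t) (fun r hr => ?_) hs
  rw [hx r hr.1.le hr.2]
  module

theorem eventually_vR_eq_left (j : Fin n) (t : ℝ) : ∀ᶠ s in 𝓝[<] t, E.vR j s = E.vL j t := by
  obtain ⟨ε, hε, hx⟩ := E.affineL j t
  filter_upwards [Ioo_mem_nhdsLT (sub_lt_self t hε)] with s hs
  refine E.vR_eq_of_forall_mem_Ioo (p := E.x j t - t • E.vL j t) (fun r hr => ?_) hs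
  rw [hx r hr.1 hr.2.le]
  module

theorem sum_norm_vL_sq (hA4 : E.A4) (t : ℝ) : ∑ j, ‖E.vL j t‖ ^ 2 = 1 := by
  obtain ⟨s, hs⟩ := (eventually_all.2 fun j => E.eventually_vR_eq_left j t).exists
  simpa only [hs] using hA4 s

theorem eventually_xvInner_right (hA4 : E.A4) (t : ℝ) :
    ∀ᶠ s in 𝓝[>] t, E.xvInner s = E.xvInner t + (s - t) := by
  filter_upwards [eventually_all.2 fun j => E.eventually_x_eq_right j t,
    eventually_all.2 fun j => E.eventually_vR_eq_right j t] with s hx hv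
  rw [xvInner, Finset.sum_congr rfl fun j _ => by rw [hx j, hv j], sum_inner_add_smul, hA4 t,
    mul_one, xvInner]

theorem eventually_xvInner_left (hA4 : E.A4) (t : ℝ) :
    ∀ᶠ s in 𝓝[<] t, E.xvInner s = E.xvInnerLeft t + (s - t) := by
  filter_upwards [eventually_all.2 fun j => E.eventually_x_eq_left j t,
    eventually_all.2 fun j => E.eventually_vR_eq_left j t] with s hx hv
  rw [xvInner, Finset.sum_congr rfl fun j _ => by rw [hx j, hv j], sum_inner_add_smul,
    E.sum_norm_vL_sq hA4 t, mul_one, xvInnerLeft]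

theorem eventually_sum_norm_sq_right (hA4 : E.A4) (t : ℝ) :
    ∀ᶠ s in 𝓝[>] t, ∑ j, ‖E.x j s‖ ^ 2 =
      ∑ j, ‖E.x j t‖ ^ 2 + 2 * (s - t) * E.xvInner t + (s - t) ^ 2 := by
  filter_upwards [eventually_all.2 fun j => E.eventually_x_eq_right j t] with s hx
  rw [Finset.sum_congr rfl fun j _ => by rw [hx j], sum_norm_add_smul_sq, hA4 t, mul_one, xvInner]

theorem continuousWithinAt_xvInner (hA4 : E.A4) (t : ℝ) :
    ContinuousWithinAt E.xvInner (Ioi t) t :=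
  (continuous_const.add (continuous_id.sub continuous_const)).continuousWithinAt
    |>.congr_of_eventuallyEq (E.eventually_xvInner_right hA4 t) (by simp)

theorem xvInnerLeft_le_xvInner (t : ℝ) : E.xvInnerLeft t ≤ E.xvInner t := by
  by_cases htC : t ∈ E.C
  · obtain ⟨j, k, hjk, -, -, hneg, hvj, hvk, hother⟩ := E.collision t htC
    set u := ‖E.x j t - E.x k t‖⁻¹ • (E.x j t - E.x k t)
    have hjump : E.xvInner t - E.xvInnerLeft t =
        ⟪E.vL k t - E.vL j t, u⟫_ℝ * ⟪E.x j t - E.x k t, u⟫_ℝ := by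
      rw [xvInner, xvInnerLeft, ← Finset.sum_sub_distrib,
        Fintype.sum_eq_add j k hjk fun i hi => by rw [hother i hi.1 hi.2, sub_self], hvj, hvk,
        inner_elastic_collision_sub]
    have hc : 0 ≤ ⟪E.vL k t - E.vL j t, u⟫_ℝ := by
      rw [← neg_sub, inner_neg_left]
      exact neg_nonneg.2 hneg.le
    have hu : 0 ≤ ⟪E.x j t - E.x k t, u⟫_ℝ := by
      rw [real_inner_smul_right, real_inner_self_eq_norm_sq]
      positivity
    linarith [mul_nonneg hc hu]
  · simp only [xvInnerLeft, xvInner, E.noKink _ t htC, le_refl]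

theorem xvInner_add_sub_le (hA4 : E.A4) {s t : ℝ} (hst : s ≤ t) :
    E.xvInner s + (t - s) ≤ E.xvInner t := by
  have hmono := le_of_forall_eventually_nhdsLT_nhdsGT (g := fun r => E.xvInner r - r) hst
    (fun r _ => ?_) (fun r _ => ?_)
  · linarith
  · filter_upwards [E.eventually_xvInner_left hA4 r] with u hu
    linarith [E.xvInnerLeft_le_xvInner r]
  · filter_upwards [E.eventually_xvInner_right hA4 r] with u hu
    linarith

theorem xnorm_le_xnorm (hA4 : E.A4) {t₀ : ℝ} (hneg : ∀ t < t₀, E.xvInner t < 0)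
    (hnonneg : ∀ t ≥ t₀, 0 ≤ E.xvInner t) (t : ℝ) : E.xnorm t₀ ≤ E.xnorm t := by
  refine Real.sqrt_le_sqrt ?_
  have hcont : Continuous fun r => ∑ j, ‖E.x j r‖ ^ 2 :=
    continuous_finsetSum _ fun j _ => (E.cont j).norm.pow 2
  rcases le_total t₀ t with h | h
  · refine le_of_continuousOn_of_forall_eventually_nhdsGT h hcont.continuousOn fun r hr => ?_
    filter_upwards [E.eventually_sum_norm_sq_right hA4 r, self_mem_nhdsWithin] with s hs hrs
    rw [hs]
    nlinarith [hnonneg r hr.1, mem_Ioi.1 hrs]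
  · refine neg_le_neg_iff.1 (le_of_continuousOn_of_forall_eventually_nhdsGT
      (f := fun r => -∑ j, ‖E.x j r‖ ^ 2) h hcont.neg.continuousOn fun r hr => ?_)
    -- on the right of `r < t₀` the parabola `|x|²` decreases until `r - ⟨x(r), v(r+)⟩`
    have hr' : r < r - E.xvInner r := by linarith [hneg r hr.2]
    filter_upwards [E.eventually_sum_norm_sq_right hA4 r, Ioo_mem_nhdsGT hr'] with s hs hrs
    rw [hs]
    nlinarith [hrs.1, hrs.2]

end HardBallEvolution

theorem exists_unique_sign_change_time_general (n d : ℕ)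
    (E : HardBallEvolution n d) (hA4 : E.A4) :
    ∃ t₀ : ℝ,
      ((∀ t < t₀, E.xvInner t < 0) ∧ (∀ t > t₀, 0 < E.xvInner t)) ∧
      0 ≤ E.xvInner t₀ ∧
      (∀ t : ℝ, E.xnorm t₀ ≤ E.xnorm t) ∧
      ∀ t₁ : ℝ, ((∀ t < t₁, E.xvInner t < 0) ∧ (∀ t > t₁, 0 < E.xvInner t)) → t₁ = t₀ := by
  obtain ⟨t₀, hsign, h₀⟩ := exists_sign_change_of_add_sub_le
    (fun _ _ => E.xvInner_add_sub_le hA4) (E.continuousWithinAt_xvInner hA4)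
  have hnonneg : ∀ t ≥ t₀, 0 ≤ E.xvInner t := fun t ht =>
    ht.eq_or_lt.elim (· ▸ h₀) fun h => (hsign.2 t h).le
  exact ⟨t₀, hsign, h₀, E.xnorm_le_xnorm hA4 hsign.1 hnonneg,
    fun t₁ ht₁ => eq_of_sign_change ht₁ hsign⟩

/-- **Remark 4.3 of [BuD18b].** Under (A3) and (A4) there is a unique time `t₀`
such that `⟨x(t), v(t+)⟩ < 0` for `t < t₀` and `⟨x(t), v(t+)⟩ > 0` for `t > t₀`;
moreover `⟨x(t₀), v(t₀+)⟩ ≥ 0` and `|x(t)| ≥ |x(t₀)|` for all `t`. -/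
theorem exists_unique_sign_change_time (n d : ℕ) (hn : 3 ≤ n) (hd : 2 ≤ d)
    (E : HardBallEvolution n d) (hA3 : E.A3) (hA4 : E.A4) :
    ∃ t₀ : ℝ,
      ((∀ t < t₀, E.xvInner t < 0) ∧ (∀ t > t₀, 0 < E.xvInner t)) ∧
      0 ≤ E.xvInner t₀ ∧
      (∀ t : ℝ, E.xnorm t₀ ≤ E.xnorm t) ∧
      ∀ t₁ : ℝ, ((∀ t < t₁, E.xvInner t < 0) ∧ (∀ t > t₁, 0 < E.xvInner t)) → t₁ = t₀ :=
  exists_unique_sign_change_time_general n d E hA4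
end

section
/- Let d ≥ 1 and n ≥ 1, let u ∈ ℝ, and let x^1, …, x^n : [u, u+1] → ℝ^d be 1-Lipschitz functions such that |x^j(t) − x^k(t)| ≥ 2 for all j ≠ k and all t ∈ [u, u+1]. Then the set of unordered pairs {j, k} with j ≠ k for which there exists t ∈ [u, u+1] with |x^j(t) − x^k(t)| = 2 has cardinality at most 5^d · n / 2. -/
/-!
If balls `j` and `k` touch at some time `t ∈ [u, u + 1]`, then, both centres having moved by at
most `1`, their centres are at distance at most `4` at time `u`. At time `u` the centres are
`2`-separated, so the packing bound `5 ^ d` for `1`-separated points in a ball of radius `2`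
limits the number of touching partners of each ball; summing these degrees counts every pair
twice.
-/

open Finset Module Set

theorem card_le_five_pow_finrank_of_separated {E ι : Type*} [NormedAddCommGroup E]
    [NormedSpace ℝ E] [FiniteDimensional ℝ E] (s : Finset ι) (y : ι → E) (c : E) {r : ℝ}
    (hr : 0 < r) (hc : ∀ i ∈ s, dist (y i) c ≤ 2 * r)
    (hsep : (s : Set ι).Pairwise fun i j => r ≤ dist (y i) (y j)) :
    #s ≤ 5 ^ finrank ℝ E := by
  classical
  set z : ι → E := fun i => r⁻¹ • (y i - c)
  have hz_dist (i j : ι) : ‖z i - z j‖ = r⁻¹ * dist (y i) (y j) := by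
    rw [← smul_sub, sub_sub_sub_cancel_right, norm_smul, norm_inv, Real.norm_of_nonneg hr.le,
      dist_eq_norm]
  have hz_sep : (s : Set ι).Pairwise fun i j => 1 ≤ ‖z i - z j‖ := fun i hi j hj hij => by
    show 1 ≤ ‖z i - z j‖
    rw [hz_dist, inv_mul_eq_div, one_le_div hr]
    exact hsep hi hj hij
  have hz_inj : Set.InjOn z s := fun i hi j hj hij => by
    by_contra hne
    exact absurd (hz_sep hi hj hne) (by simp [hij])
  rw [← card_image_of_injOn hz_inj]
  refine Besicovitch.card_le_of_separated _ ?_ ?_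
  · simp only [Finset.mem_image, forall_exists_index, and_imp, forall_apply_eq_imp_iff₂]
    intro i hi
    rw [norm_smul, norm_inv, Real.norm_of_nonneg hr.le, ← dist_eq_norm, inv_mul_le_iff₀ hr]
    linarith [hc i hi]
  · simp only [Finset.mem_image, ne_eq, forall_exists_index, and_imp, forall_apply_eq_imp_iff₂]
    intro i hi j hj hij
    exact hz_sep hi hj (by rintro rfl; exact hij rfl)

theorem LipschitzOnWith.dist_le_dist_add {α β : Type*} [PseudoMetricSpace α]
    [PseudoMetricSpace β] {f g : α → β} {s : Set α} {K : NNReal}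
    (hf : LipschitzOnWith K f s) (hg : LipschitzOnWith K g s) {a b : α} (ha : a ∈ s)
    (hb : b ∈ s) : dist (f a) (g a) ≤ dist (f b) (g b) + 2 * K * dist a b := by
  calc dist (f a) (g a) ≤ dist (f a) (f b) + dist (f b) (g b) + dist (g b) (g a) :=
        dist_triangle4 _ _ _ _
    _ ≤ K * dist a b + dist (f b) (g b) + K * dist b a := by
        gcongr
        exacts [hf.dist_le_mul a ha b hb, hg.dist_le_mul b hb a ha]
    _ = dist (f b) (g b) + 2 * K * dist a b := by rw [dist_comm b a]; ring

theorem SimpleGraph.ncard_setOf_lt_adj_eq_ncard_edgeSet {V : Type*} [LinearOrder V]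
    (G : SimpleGraph V) :
    {p : V × V | p.1 < p.2 ∧ G.Adj p.1 p.2}.ncard = G.edgeSet.ncard := by
  refine Set.ncard_congr (fun p _ => s(p.1, p.2)) (fun p hp => hp.2) ?_ ?_
  · rintro ⟨a, b⟩ ⟨c, d⟩ ⟨hab, -⟩ ⟨hcd, -⟩ h
    rcases Sym2.eq_iff.mp h with ⟨rfl, rfl⟩ | ⟨rfl, rfl⟩
    · rfl
    · exact absurd hab hcd.not_gt
  · refine Sym2.ind fun a b hab => ?_
    rcases (G.ne_of_adj hab).lt_or_gt with h | h
    · exact ⟨(a, b), ⟨h, hab⟩, rfl⟩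
    · exact ⟨(b, a), ⟨h, hab.symm⟩, Sym2.eq_swap⟩

/-- Balls of radius `1` centred at `x j t` touch when their centres are at distance `2`. -/
def touchingGraph {ι E : Type*} [PseudoMetricSpace E] (I : Set ℝ) (x : ι → ℝ → E) :
    SimpleGraph ι where
  Adj j k := j ≠ k ∧ ∃ t ∈ I, dist (x j t) (x k t) = 2
  symm := ⟨fun _ _ ⟨hne, t, ht, h⟩ => ⟨hne.symm, t, ht, dist_comm (x _ t) _ ▸ h⟩⟩
  loopless := ⟨fun _ h => h.1 rfl⟩

theorem touchingGraph_adj {ι E : Type*} [PseudoMetricSpace E] {I : Set ℝ} {x : ι → ℝ → E}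
    {j k : ι} :
    (touchingGraph I x).Adj j k ↔ j ≠ k ∧ ∃ t ∈ I, dist (x j t) (x k t) = 2 :=
  Iff.rfl

theorem degree_touchingGraph_le {ι E : Type*} [Fintype ι] [NormedAddCommGroup E]
    [NormedSpace ℝ E] [FiniteDimensional ℝ E] {u : ℝ} {x : ι → ℝ → E}
    (hlip : ∀ j, LipschitzOnWith 1 (x j) (Icc u (u + 1)))
    (hsep : Pairwise fun j k => 2 ≤ dist (x j u) (x k u))
    [DecidableRel (touchingGraph (Icc u (u + 1)) x).Adj] (j : ι) :
    (touchingGraph (Icc u (u + 1)) x).degree j ≤ 5 ^ finrank ℝ E := by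
  have hu : u ∈ Icc u (u + 1) := left_mem_Icc.mpr (by linarith)
  rw [← SimpleGraph.card_neighborFinset_eq_degree]
  refine card_le_five_pow_finrank_of_separated _ (fun k => x k u) (x j u) two_pos ?_ ?_
  · intro k hk
    rw [SimpleGraph.mem_neighborFinset, touchingGraph_adj] at hk
    obtain ⟨-, t, ht, htouch⟩ := hk
    calc dist (x k u) (x j u) ≤ dist (x k t) (x j t) + 2 * (1 : NNReal) * dist u t :=
          (hlip k).dist_le_dist_add (hlip j) hu ht
      _ ≤ 2 * 2 := by
          have htu : dist u t ≤ 1 := (Real.dist_le_of_mem_Icc hu ht).trans (by linarith)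
          rw [dist_comm (x k t), htouch, NNReal.coe_one]
          linarith
  · exact fun k _ k' _ hkk' => hsep hkk'

theorem touching_pairs_in_unit_time_general (d n : ℕ) (u : ℝ)
    (x : Fin n → ℝ → EuclideanSpace ℝ (Fin d))
    (hlip : ∀ j, ∀ s ∈ Set.Icc u (u + 1), ∀ t ∈ Set.Icc u (u + 1),
      ‖x j s - x j t‖ ≤ |s - t|)
    (hsep : ∀ j k, j ≠ k → ∀ t ∈ Set.Icc u (u + 1), 2 ≤ ‖x j t - x k t‖) :
    ({p : Fin n × Fin n | p.1 < p.2 ∧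
        ∃ t ∈ Set.Icc u (u + 1), ‖x p.1 t - x p.2 t‖ = 2}.ncard : ℝ) ≤
      5 ^ d * n / 2 := by
  classical
  set G := touchingGraph (Icc u (u + 1)) x
  have hu : u ∈ Icc u (u + 1) := left_mem_Icc.mpr (by linarith)
  have hpairs : {p : Fin n × Fin n | p.1 < p.2 ∧
      ∃ t ∈ Icc u (u + 1), ‖x p.1 t - x p.2 t‖ = 2} =
      {p | p.1 < p.2 ∧ G.Adj p.1 p.2} := by
    ext p
    refine and_congr_right fun h => ?_
    rw [touchingGraph_adj, and_iff_right h.ne]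
    simp only [dist_eq_norm]
  have hdeg (j : Fin n) : G.degree j ≤ 5 ^ d := by
    simpa only [finrank_euclideanSpace_fin] using degree_touchingGraph_le
      (fun j => LipschitzOnWith.mk_one (f := x j) fun s hs t ht => by
        rw [Real.dist_eq, dist_eq_norm]; exact hlip j s hs t ht)
      (fun j k hjk => by simpa only [dist_eq_norm] using hsep j k hjk u hu) j
  have hedges : 2 * #G.edgeFinset ≤ n * 5 ^ d := by
    rw [← G.sum_degrees_eq_twice_card_edges]
    simpa using Finset.sum_le_card_nsmul univ _ _ fun j _ => hdeg j
  rw [hpairs, G.ncard_setOf_lt_adj_eq_ncard_edgeSet, ← G.coe_edgeFinset, ncard_coe_finset,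
    le_div_iff₀ two_pos]
  exact_mod_cast (by linarith : #G.edgeFinset * 2 ≤ 5 ^ d * n)

/-- **Step 2 of the proof of Theorem 1.1 (pairs version).** If `n` unit balls
move with speeds at most 1 (centers `1`-Lipschitz) during a unit time interval
and never overlap, then at most `5^d · n / 2` unordered pairs of balls can
touch during that interval. -/
theorem touching_pairs_in_unit_time (d n : ℕ) (hd : 1 ≤ d) (hn : 1 ≤ n) (u : ℝ)
    (x : Fin n → ℝ → EuclideanSpace ℝ (Fin d))
    (hlip : ∀ j, ∀ s ∈ Set.Icc u (u + 1), ∀ t ∈ Set.Icc u (u + 1),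
      ‖x j s - x j t‖ ≤ |s - t|)
    (hsep : ∀ j k, j ≠ k → ∀ t ∈ Set.Icc u (u + 1), 2 ≤ ‖x j t - x k t‖) :
    ({p : Fin n × Fin n | p.1 < p.2 ∧
        ∃ t ∈ Set.Icc u (u + 1), ‖x p.1 t - x p.2 t‖ = 2}.ncard : ℝ) ≤
      5 ^ d * n / 2 :=
  touching_pairs_in_unit_time_general d n u x hlip hsep
end
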